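/- arXiv:1901.05774 — 2 statements merged into one kernel-verified Lean document; each statement's English description precedes it below -/
import Mathlib

section
/- Let V be Minkowski space, v null, w spacelike with ⟨v,w⟩ = 0, w ≠ 0, and set N = v∧w. Then lim_{t→∞} (1/(1+t²)) exp(tN) = −(⟨w,w⟩/2) · (x ↦ ⟨v,x⟩v), i.e. the rescaled exponential converges to −‖w‖²/2 times the rank-one map x ↦ ⟨v,x⟩v. -/
open Matrix Filter

/-- Sign of the Minkowski metric on `ℝ^{n+2}_1`: the last coordinate is timelike. -/
noncomputable def minkSign (n : ℕ) (i : Fin (n + 2)) : ℝ := if (i : ℕ) = n + 1 then -1 else 1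

/-- The Minkowski inner product `⟨·,·⟩` on `ℝ^{n+2}_1` (signature (n+1,1)). -/
noncomputable def mink (n : ℕ) (x y : Fin (n + 2) → ℝ) : ℝ := ∑ i, minkSign n i * x i * y i

/-- The wedge endomorphism `(v ∧ w)(x) = ⟨v,x⟩w − ⟨w,x⟩v`, realized as a matrix acting by `mulVec`. -/
noncomputable def wedgeM (n : ℕ) (v w : Fin (n + 2) → ℝ) : Matrix (Fin (n + 2)) (Fin (n + 2)) ℝ :=
  Matrix.of fun i j => minkSign n j * (v j * w i - w j * v i)

/-!
If `v` is null and orthogonal to `w`, then `N = v ∧ w` satisfies `N² = -⟨w,w⟩ (x ↦ ⟨v,x⟩ v)` and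
`N³ = 0`, so `exp (t N) = 1 + t N + (t²/2) N²` and after dividing by `1 + t²` only `N²/2` survives.
-/

open Topology

section NilpotentExp

variable {A : Type*} [Ring A] [Algebra ℝ A] [TopologicalSpace A] [IsTopologicalRing A]

theorem NormedSpace.exp_smul_of_pow_three_eq_zero {N : A} (hN : N ^ 3 = 0) (t : ℝ) :
    NormedSpace.exp (t • N) = 1 + t • N + (t ^ 2 / 2) • N ^ 2 := by
  have hvanish : ∀ k ∉ Finset.range 3, ((k.factorial : ℝ)⁻¹) • (t • N) ^ k = 0 := fun k hk => by
    rw [smul_pow, pow_eq_zero_of_le (by simpa using hk) hN, smul_zero, smul_zero]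
  rw [NormedSpace.exp_eq_tsum ℝ]
  dsimp only
  rw [tsum_eq_sum hvanish]
  simp only [Finset.sum_range_succ, Finset.sum_range_zero, smul_pow, smul_smul]
  norm_num
  ring_nf

lemma tendsto_inv_one_add_sq_atTop : Tendsto (fun t : ℝ => (1 + t ^ 2)⁻¹) atTop (𝓝 0) :=
  (tendsto_atTop_add_const_left _ 1 (tendsto_pow_atTop two_ne_zero)).inv_tendsto_atTop

lemma tendsto_inv_one_add_sq_mul_sq_atTop :
    Tendsto (fun t : ℝ => (1 + t ^ 2)⁻¹ * t ^ 2) atTop (𝓝 1) := by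
  have h := tendsto_inv_one_add_sq_atTop.const_sub (1 : ℝ)
  rw [sub_zero] at h
  refine h.congr fun t => ?_
  field_simp
  ring

lemma tendsto_inv_one_add_sq_mul_self_atTop :
    Tendsto (fun t : ℝ => (1 + t ^ 2)⁻¹ * t) atTop (𝓝 0) := by
  have h := tendsto_inv_atTop_zero.mul tendsto_inv_one_add_sq_mul_sq_atTop
  rw [zero_mul] at h
  refine h.congr' ?_
  filter_upwards [eventually_ne_atTop 0] with t ht
  field_simp

theorem tendsto_inv_one_add_sq_smul_exp_smul [ContinuousSMul ℝ A] {N : A} (hN : N ^ 3 = 0) :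
    Tendsto (fun t : ℝ => (1 + t ^ 2)⁻¹ • NormedSpace.exp (t • N)) atTop
      (𝓝 ((1 / 2 : ℝ) • N ^ 2)) := by
  have h := ((tendsto_inv_one_add_sq_atTop.smul_const (1 : A)).add
    (tendsto_inv_one_add_sq_mul_self_atTop.smul_const N)).add
    ((tendsto_inv_one_add_sq_mul_sq_atTop.div_const 2).smul_const (N ^ 2))
  rw [zero_smul, zero_smul, zero_add, zero_add] at h
  refine h.congr fun t => ?_
  rw [NormedSpace.exp_smul_of_pow_three_eq_zero hN, smul_add, smul_add, smul_smul, smul_smul,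
    mul_div_assoc]

end NilpotentExp

section Minkowski

variable {n : ℕ}

lemma mink_comm (x y : Fin (n + 2) → ℝ) : mink n x y = mink n y x := by
  simp only [mink, mul_right_comm]

/-- The rank-one map `x ↦ ⟨a, x⟩ b`. -/
noncomputable def minkRankOne (n : ℕ) (a b : Fin (n + 2) → ℝ) :
    Matrix (Fin (n + 2)) (Fin (n + 2)) ℝ :=
  Matrix.of fun i j => minkSign n j * a j * b i

lemma minkRankOne_mul_minkRankOne (a b c d : Fin (n + 2) → ℝ) :
    minkRankOne n a b * minkRankOne n c d = mink n a d • minkRankOne n c b := by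
  ext i j
  simp only [minkRankOne, mink, mul_apply, Matrix.smul_apply, of_apply, smul_eq_mul, Finset.sum_mul]
  exact Finset.sum_congr rfl fun k _ => by ring

lemma wedgeM_eq_sub (v w : Fin (n + 2) → ℝ) :
    wedgeM n v w = minkRankOne n v w - minkRankOne n w v := by
  ext i j
  simp only [wedgeM, minkRankOne, Matrix.sub_apply, of_apply]
  ring

variable {v w : Fin (n + 2) → ℝ}

lemma wedgeM_sq (hv : mink n v v = 0) (hvw : mink n v w = 0) :
    wedgeM n v w ^ 2 = -mink n w w • minkRankOne n v v := by
  rw [sq, wedgeM_eq_sub, sub_mul, mul_sub, mul_sub]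
  simp only [minkRankOne_mul_minkRankOne, mink_comm w v, hv, hvw, zero_smul]
  simp

lemma wedgeM_pow_three (hv : mink n v v = 0) (hvw : mink n v w = 0) :
    wedgeM n v w ^ 3 = 0 := by
  rw [pow_succ, wedgeM_sq hv hvw, wedgeM_eq_sub, smul_mul_assoc, mul_sub]
  simp only [minkRankOne_mul_minkRankOne, hv, hvw, zero_smul, sub_zero, smul_zero]

end Minkowski

theorem wedge_degenerate_rescaled_exp_limit_general (n : ℕ) (v w : Fin (n + 2) → ℝ)
    (hv : mink n v v = 0) (hvw : mink n v w = 0) :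
    Tendsto (fun t : ℝ => (1 + t ^ 2)⁻¹ • NormedSpace.exp (t • wedgeM n v w)) atTop
      (nhds ((-(mink n w w / 2)) • Matrix.of fun i j => minkSign n j * v j * v i)) := by
  have hlimit : (-(mink n w w / 2)) • minkRankOne n v v = (1 / 2 : ℝ) • wedgeM n v w ^ 2 := by
    rw [wedgeM_sq hv hvw, smul_smul]
    ring_nf
  exact hlimit ▸ tendsto_inv_one_add_sq_smul_exp_smul (wedgeM_pow_three hv hvw)

/-- for `v` null, `w ≠ 0` spacelike, `⟨v,w⟩ = 0`, `N = v∧w`, the rescaled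
exponential `(1+t²)⁻¹ exp(tN)` converges as `t → ∞` to `−(⟨w,w⟩/2)` times the
rank-one map `x ↦ ⟨v,x⟩v` (whose matrix is `(i,j) ↦ σ_j v_j v_i`). -/
theorem wedge_degenerate_rescaled_exp_limit (n : ℕ) (v w : Fin (n + 2) → ℝ)
    (hv : mink n v v = 0) (hw : 0 < mink n w w) (hvw : mink n v w = 0) (hw0 : w ≠ 0) :
    Tendsto (fun t : ℝ => (1 + t ^ 2)⁻¹ • NormedSpace.exp (t • wedgeM n v w)) atTop
      (nhds ((-(mink n w w / 2)) • Matrix.of fun i j => minkSign n j * v j * v i)) :=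
  wedge_degenerate_rescaled_exp_limit_general n v w hv hvw
end

section
/- Let A, B : [a,b] → End(ℝ^N) be continuous, let Γ_A, Γ_B be the solutions of Γ' = ΓA resp. Γ' = ΓB with value id at a, and suppose |Γ_A(s)| ≤ C₁, |Γ_B(s)⁻¹Γ_B(t)| ≤ C₂ for all s,t, and |A(s) − B(s)| ≤ ε for all s. Then |Γ_A(t) − Γ_B(t)| ≤ C₁C₂ε(b−a) for all t ∈ [a,b]. -/
/-! Variation of constants: `G = ΓA ΓB⁻¹` satisfies `G' = ΓA (A - B) ΓB⁻¹` and `G a = 1`, so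
`s ↦ G s ΓB(t)` runs from `ΓB(t)` to `ΓA(t)` with derivative of norm at most
`‖ΓA s‖ ‖A s - B s‖ ‖ΓB(s)⁻¹ ΓB(t)‖ ≤ C₁ ε C₂`; the mean value inequality on `[a, t]` concludes. -/

open Set

open scoped Ring

section RingInverse

variable {𝕜 R : Type*} [NontriviallyNormedField 𝕜] [NormedRing R] [HasSummableGeomSeries R]
  [NormedAlgebra 𝕜 R] {f g : 𝕜 → R} {f' : R} {s : Set 𝕜} {x : 𝕜}

theorem HasDerivWithinAt.ringInverse (hf : HasDerivWithinAt f f' s x) (hx : IsUnit (f x)) :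
    HasDerivWithinAt (fun y => (f y)⁻¹ʳ) (-((f x)⁻¹ʳ * f' * (f x)⁻¹ʳ)) s x := by
  have hinv := hasFDerivAt_ringInverse (𝕜 := 𝕜) hx.unit
  rw [hx.unit_spec] at hinv
  simpa [← Ring.inverse_of_isUnit hx, Function.comp_def] using hinv.comp_hasDerivWithinAt x hf

theorem HasDerivWithinAt.mul_ringInverse_of_rightLinear {a b : R}
    (hf : HasDerivWithinAt f (f x * a) s x) (hg : HasDerivWithinAt g (g x * b) s x)
    (hx : IsUnit (g x)) :
    HasDerivWithinAt (fun y => f y * (g y)⁻¹ʳ) (f x * (a - b) * (g x)⁻¹ʳ) s x := by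
  refine (hf.mul (hg.ringInverse hx)).congr_deriv ?_
  rw [Ring.inverse_mul_cancel_left _ _ hx]
  noncomm_ring

end RingInverse

theorem norm_sub_le_of_rightLinear_odes {R : Type*} [NormedRing R] [HasSummableGeomSeries R]
    [NormedAlgebra ℝ R] {a b C₁ C₂ ε : ℝ} {A B ΓA ΓB : ℝ → R} (hab : a ≤ b)
    (hΓA : ∀ t ∈ Icc a b, HasDerivWithinAt ΓA (ΓA t * A t) (Icc a b) t) (hΓAa : ΓA a = 1)
    (hΓB : ∀ t ∈ Icc a b, HasDerivWithinAt ΓB (ΓB t * B t) (Icc a b) t) (hΓBa : ΓB a = 1)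
    (hunit : ∀ t ∈ Icc a b, IsUnit (ΓB t))
    (hC₁ : ∀ s ∈ Ico a b, ‖ΓA s‖ ≤ C₁) (hC₂ : ∀ s ∈ Ico a b, ‖(ΓB s)⁻¹ʳ * ΓB b‖ ≤ C₂)
    (hε : ∀ s ∈ Ico a b, ‖A s - B s‖ ≤ ε) :
    ‖ΓA b - ΓB b‖ ≤ C₁ * C₂ * ε * (b - a) := by
  have hb : b ∈ Icc a b := right_mem_Icc.2 hab
  have hderiv : ∀ t ∈ Icc a b, HasDerivWithinAt (fun s => ΓA s * (ΓB s)⁻¹ʳ * ΓB b)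
      (ΓA t * (A t - B t) * ((ΓB t)⁻¹ʳ * ΓB b)) (Icc a b) t := fun t ht => by
    simpa only [mul_assoc] using
      ((hΓA t ht).mul_ringInverse_of_rightLinear (hΓB t ht) (hunit t ht)).mul_const (ΓB b)
  have hbound : ∀ s ∈ Ico a b, ‖ΓA s * (A s - B s) * ((ΓB s)⁻¹ʳ * ΓB b)‖ ≤ C₁ * C₂ * ε :=
    fun s hs => calc
      _ ≤ ‖ΓA s‖ * ‖A s - B s‖ * ‖(ΓB s)⁻¹ʳ * ΓB b‖ := norm_mul₃_le
      _ ≤ C₁ * ε * C₂ := by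
        have hC₁0 : 0 ≤ C₁ := (norm_nonneg _).trans (hC₁ s hs)
        have hε0 : 0 ≤ ε := (norm_nonneg _).trans (hε s hs)
        gcongr
        exacts [hC₁ s hs, hε s hs, hC₂ s hs]
      _ = C₁ * C₂ * ε := by ring
  simpa [hΓBa, hΓAa, Ring.inverse_mul_cancel_right _ _ (hunit b hb)] using
    norm_image_sub_le_of_norm_deriv_le_segment' hderiv hbound b hb

theorem fundamental_solutions_comparison_general (N : ℕ) (a b : ℝ)
    (A B ΓA ΓB ΓBinv : ℝ → (Fin N → ℝ) →L[ℝ] (Fin N → ℝ))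
    (C₁ C₂ ε : ℝ)
    (hΓA : ∀ t ∈ Icc a b, HasDerivAt ΓA (ΓA t * A t) t) (hΓAa : ΓA a = 1)
    (hΓB : ∀ t ∈ Icc a b, HasDerivAt ΓB (ΓB t * B t) t) (hΓBa : ΓB a = 1)
    (hinv : ∀ t ∈ Icc a b, ΓB t * ΓBinv t = 1 ∧ ΓBinv t * ΓB t = 1)
    (hC₁ : ∀ s ∈ Icc a b, ‖ΓA s‖ ≤ C₁)
    (hC₂ : ∀ s ∈ Icc a b, ∀ t ∈ Icc a b, ‖ΓBinv s * ΓB t‖ ≤ C₂)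
    (hε : ∀ s ∈ Icc a b, ‖A s - B s‖ ≤ ε) :
    ∀ t ∈ Icc a b, ‖ΓA t - ΓB t‖ ≤ C₁ * C₂ * ε * (b - a) := by
  intro t ht
  have hsub : Icc a t ⊆ Icc a b := Icc_subset_Icc_right ht.2
  have hsub' : Ico a t ⊆ Icc a b := Ico_subset_Icc_self.trans hsub
  have hunit (s : ℝ) (hs : s ∈ Icc a b) : IsUnit (ΓB s) :=
    ⟨⟨ΓB s, ΓBinv s, (hinv s hs).1, (hinv s hs).2⟩, rfl⟩
  have hinverse (s : ℝ) (hs : s ∈ Icc a b) : (ΓB s)⁻¹ʳ = ΓBinv s :=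
    Ring.inverse_unit ⟨ΓB s, ΓBinv s, (hinv s hs).1, (hinv s hs).2⟩
  have hcomparison := norm_sub_le_of_rightLinear_odes ht.1
    (fun s hs => (hΓA s (hsub hs)).hasDerivWithinAt) hΓAa
    (fun s hs => (hΓB s (hsub hs)).hasDerivWithinAt) hΓBa (fun s hs => hunit s (hsub hs))
    (fun s hs => hC₁ s (hsub' hs)) (fun s hs => hinverse s (hsub' hs) ▸ hC₂ s (hsub' hs) t ht)
    (fun s hs => hε s (hsub' hs))
  have hC₁0 : 0 ≤ C₁ := (norm_nonneg _).trans (hC₁ t ht)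
  have hC₂0 : 0 ≤ C₂ := (norm_nonneg _).trans (hC₂ t ht t ht)
  have hε0 : 0 ≤ ε := (norm_nonneg _).trans (hε t ht)
  calc _ ≤ C₁ * C₂ * ε * (t - a) := hcomparison
    _ ≤ C₁ * C₂ * ε * (b - a) := by gcongr; exact ht.2

/-- quantitative comparison of fundamental solutions: if `‖Γ_A(s)‖ ≤ C₁`,
`‖Γ_B(s)⁻¹Γ_B(t)‖ ≤ C₂` and `‖A(s) − B(s)‖ ≤ ε` on `[a,b]`, then
`‖Γ_A(t) − Γ_B(t)‖ ≤ C₁C₂ε(b−a)`. -/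
theorem fundamental_solutions_comparison (N : ℕ) (a b : ℝ) (hab : a ≤ b)
    (A B ΓA ΓB ΓBinv : ℝ → (Fin N → ℝ) →L[ℝ] (Fin N → ℝ))
    (C₁ C₂ ε : ℝ)
    (hA : ContinuousOn A (Icc a b)) (hB : ContinuousOn B (Icc a b))
    (hΓA : ∀ t ∈ Icc a b, HasDerivAt ΓA (ΓA t * A t) t) (hΓAa : ΓA a = 1)
    (hΓB : ∀ t ∈ Icc a b, HasDerivAt ΓB (ΓB t * B t) t) (hΓBa : ΓB a = 1)
    (hinv : ∀ t ∈ Icc a b, ΓB t * ΓBinv t = 1 ∧ ΓBinv t * ΓB t = 1)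
    (hC₁ : ∀ s ∈ Icc a b, ‖ΓA s‖ ≤ C₁)
    (hC₂ : ∀ s ∈ Icc a b, ∀ t ∈ Icc a b, ‖ΓBinv s * ΓB t‖ ≤ C₂)
    (hε : ∀ s ∈ Icc a b, ‖A s - B s‖ ≤ ε) :
    ∀ t ∈ Icc a b, ‖ΓA t - ΓB t‖ ≤ C₁ * C₂ * ε * (b - a) :=
  fundamental_solutions_comparison_general N a b A B ΓA ΓB ΓBinv C₁ C₂ ε hΓA hΓAa hΓB hΓBa hinv hC₁
    hC₂ hε
end
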